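/- For the 7-dimensional Lie algebra above, the closed 1-form α1 satisfies i_{X7}α1 = 0 and (dα7)^3 ∧ α1 = 0, and its class in H^1(g) is non-zero, while the class of α7∧(dα7)^2∧α1 in H^6(g) is zero. Hence the Lefschetz relation R_{Lef_1} for (g, α7) is not the graph of an injective map. -/

import Mathlib

/-!
`α1` is closed since no bracket has an `X1`-component, and not exact since there are no exact
1-cochains. Write `dα7 = -(x + y + z)` with `x = α1∧α4`, `y = α2∧α3`, `z = α5∧α6`: these
2-forms commute and square to zero, and `x ∧ α1 = 0`. Hence `(dα7)³ = -6 xyz` is killed by `α1`,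
and `(dα7)² ∧ α1 = 2 yz ∧ α1`, so that `α7 ∧ (dα7)² ∧ α1 = -2 α1∧α2∧α3∧α5∧α6∧α7`. Since
`dα4 = -α1∧α3` and `α4∧α2∧α5∧α6 ∧ dα7 = 0`, this is `-2 d(α4∧α2∧α5∧α6∧α7)`.
-/

/-- The bracket of the 7-dimensional nilpotent Lie algebra:
`[X1,X2]=X3, [X1,X3]=X4, [X1,X4]=X7, [X2,X3]=X7, [X5,X6]=X7`. -/
def bracket7 (x y : Fin 7 → ℝ) : Fin 7 → ℝ :=
  ![0, 0, x 0 * y 1 - x 1 * y 0, x 0 * y 2 - x 2 * y 0, 0, 0,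
    (x 0 * y 3 - x 3 * y 0) + (x 1 * y 2 - x 2 * y 1) + (x 4 * y 5 - x 5 * y 4)]

/-- The dual basis 1-forms `α1,…,α7`, viewed in the exterior algebra `Λ g*`. -/
noncomputable def a7 (i : Fin 7) : ExteriorAlgebra ℝ (Module.Dual ℝ (Fin 7 → ℝ)) :=
  ExteriorAlgebra.ι ℝ (LinearMap.proj i)

/-- `dα7 = -α1∧α4 - α2∧α3 - α5∧α6`. -/
noncomputable def da7 : ExteriorAlgebra ℝ (Module.Dual ℝ (Fin 7 → ℝ)) :=
  -(a7 0 * a7 3) - a7 1 * a7 2 - a7 4 * a7 5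

/-- The Chevalley-Eilenberg differential of an arbitrary 1-form `β = Σ cᵢ αᵢ`, expressed in
the exterior algebra: `dβ = c₃ dα3 + c₄ dα4 + c₇ dα7` (since `dα1 = dα2 = dα5 = dα6 = 0`). -/
noncomputable def D1 (β : Module.Dual ℝ (Fin 7 → ℝ)) :
    ExteriorAlgebra ℝ (Module.Dual ℝ (Fin 7 → ℝ)) :=
  β ![0, 0, 1, 0, 0, 0, 0] • (-(a7 0 * a7 1)) + β ![0, 0, 0, 1, 0, 0, 0] • (-(a7 0 * a7 2)) +
    β ![0, 0, 0, 0, 0, 0, 1] • da7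

/-- The set of differentials of decomposable 5-cochains (whose span is the space of exact
6-cochains), via the derivation rule. -/
noncomputable def exact6 : Set (ExteriorAlgebra ℝ (Module.Dual ℝ (Fin 7 → ℝ))) :=
  {x | ∃ b1 b2 b3 b4 b5 : Module.Dual ℝ (Fin 7 → ℝ),
    x = D1 b1 * ExteriorAlgebra.ι ℝ b2 * ExteriorAlgebra.ι ℝ b3 * ExteriorAlgebra.ι ℝ b4 *
          ExteriorAlgebra.ι ℝ b5
      - ExteriorAlgebra.ι ℝ b1 * D1 b2 * ExteriorAlgebra.ι ℝ b3 * ExteriorAlgebra.ι ℝ b4 *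
          ExteriorAlgebra.ι ℝ b5
      + ExteriorAlgebra.ι ℝ b1 * ExteriorAlgebra.ι ℝ b2 * D1 b3 * ExteriorAlgebra.ι ℝ b4 *
          ExteriorAlgebra.ι ℝ b5
      - ExteriorAlgebra.ι ℝ b1 * ExteriorAlgebra.ι ℝ b2 * ExteriorAlgebra.ι ℝ b3 * D1 b4 *
          ExteriorAlgebra.ι ℝ b5
      + ExteriorAlgebra.ι ℝ b1 * ExteriorAlgebra.ι ℝ b2 * ExteriorAlgebra.ι ℝ b3 *
          ExteriorAlgebra.ι ℝ b4 * D1 b5}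

theorem a7_mul_self (i : Fin 7) : a7 i * a7 i = 0 :=
  ExteriorAlgebra.ι_sq_zero _

theorem a7_mul_a7_mul_self (i : Fin 7) (x : ExteriorAlgebra ℝ (Module.Dual ℝ (Fin 7 → ℝ))) :
    a7 i * (a7 i * x) = 0 := by
  rw [← mul_assoc, a7_mul_self, zero_mul]

theorem a7_mul_a7_comm (i j : Fin 7) : a7 i * a7 j = -(a7 j * a7 i) :=
  CliffordAlgebra.ι_mul_ι_comm_of_isOrtho (.all _ _)

theorem a7_mul_a7_mul_comm (i j : Fin 7) (x : ExteriorAlgebra ℝ (Module.Dual ℝ (Fin 7 → ℝ))) :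
    a7 i * (a7 j * x) = -(a7 j * (a7 i * x)) :=
  CliffordAlgebra.ι_mul_ι_mul_of_isOrtho x (.all _ _)

theorem D1_proj (i : Fin 7) :
    D1 (LinearMap.proj i) = ![0, 0, -(a7 0 * a7 1), -(a7 0 * a7 2), 0, 0, da7] i := by
  fin_cases i <;> simp [D1]

/-- `D5 β₁ … β₅ = d(β₁ ∧ ⋯ ∧ β₅)` by the graded Leibniz rule. -/
noncomputable def D5 (b1 b2 b3 b4 b5 : Module.Dual ℝ (Fin 7 → ℝ)) :
    ExteriorAlgebra ℝ (Module.Dual ℝ (Fin 7 → ℝ)) :=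
  D1 b1 * ExteriorAlgebra.ι ℝ b2 * ExteriorAlgebra.ι ℝ b3 * ExteriorAlgebra.ι ℝ b4 *
        ExteriorAlgebra.ι ℝ b5
    - ExteriorAlgebra.ι ℝ b1 * D1 b2 * ExteriorAlgebra.ι ℝ b3 * ExteriorAlgebra.ι ℝ b4 *
        ExteriorAlgebra.ι ℝ b5
    + ExteriorAlgebra.ι ℝ b1 * ExteriorAlgebra.ι ℝ b2 * D1 b3 * ExteriorAlgebra.ι ℝ b4 *
        ExteriorAlgebra.ι ℝ b5
    - ExteriorAlgebra.ι ℝ b1 * ExteriorAlgebra.ι ℝ b2 * ExteriorAlgebra.ι ℝ b3 * D1 b4 *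
        ExteriorAlgebra.ι ℝ b5
    + ExteriorAlgebra.ι ℝ b1 * ExteriorAlgebra.ι ℝ b2 * ExteriorAlgebra.ι ℝ b3 *
        ExteriorAlgebra.ι ℝ b4 * D1 b5

theorem D5_mem_span_exact6 (b1 b2 b3 b4 b5 : Module.Dual ℝ (Fin 7 → ℝ)) :
    D5 b1 b2 b3 b4 b5 ∈ Submodule.span ℝ exact6 :=
  Submodule.subset_span ⟨b1, b2, b3, b4, b5, rfl⟩

theorem da7_mul_da7_mul_da7_mul_a7_eq_zero : da7 * da7 * da7 * a7 0 = 0 := by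
  simp only [da7, neg_mul, mul_neg, add_mul, mul_add, mul_assoc, neg_neg, sub_eq_add_neg,
    neg_add]
  -- sorts every monomial by increasing index; a repeated index kills it
  simp +decide only [a7_mul_self, a7_mul_a7_mul_self, mul_neg, neg_neg, mul_zero, neg_zero,
    add_zero, fun (i j : Fin 7) (_ : j < i) => a7_mul_a7_comm i j,
    fun (i j : Fin 7) (_ : j < i) => a7_mul_a7_mul_comm i j]

theorem a7_mul_da7_mul_da7_mul_a7_eq_D5 :
    a7 6 * da7 * da7 * a7 0 = (-2 : ℝ) • D5 (LinearMap.proj 3) (LinearMap.proj 1)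
      (LinearMap.proj 4) (LinearMap.proj 5) (LinearMap.proj 6) := by
  simp only [D5, D1_proj, Matrix.cons_val, ← a7.eq_1, da7, neg_mul, mul_neg, add_mul, mul_add,
    mul_assoc, neg_neg, sub_eq_add_neg, neg_add, smul_add, smul_neg, zero_mul, mul_zero]
  simp +decide only [a7_mul_self, a7_mul_a7_mul_self, mul_neg, neg_neg, mul_zero, neg_zero,
    add_zero, zero_add, smul_zero, neg_smul, two_smul, neg_add,
    fun (i j : Fin 7) (_ : j < i) => a7_mul_a7_comm i j,
    fun (i j : Fin 7) (_ : j < i) => a7_mul_a7_mul_comm i j]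

/-- The closed 1-form `α1` satisfies `i_{X7} α1 = 0` and `(dα7)³ ∧ α1 = 0`, its class in
`H¹(g)` is non-zero (`α1 ≠ 0`, there being no exact 1-cochains), while the class of
`α7 ∧ (dα7)² ∧ α1` in `H⁶(g)` is zero (it is exact). Hence the Lefschetz relation
`R_{Lef₁}` for `(g, α7)` is not the graph of an injective map. -/
theorem stmt17 :
    (∀ X Y, (LinearMap.proj 0 : Module.Dual ℝ (Fin 7 → ℝ)) (bracket7 X Y) = 0) ∧
    (LinearMap.proj 0 : Module.Dual ℝ (Fin 7 → ℝ)) ![0, 0, 0, 0, 0, 0, 1] = 0 ∧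
    da7 * da7 * da7 * a7 0 = 0 ∧
    (LinearMap.proj 0 : Module.Dual ℝ (Fin 7 → ℝ)) ≠ 0 ∧
    a7 6 * da7 * da7 * a7 0 ∈ Submodule.span ℝ exact6 := by
  refine ⟨fun X Y => rfl, rfl, da7_mul_da7_mul_da7_mul_a7_eq_zero, fun h => ?_, ?_⟩
  · simpa using LinearMap.congr_fun h (Pi.single 0 1)
  · rw [a7_mul_da7_mul_da7_mul_a7_eq_D5]
    exact Submodule.smul_mem _ _ (D5_mem_span_exact6 _ _ _ _ _)
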